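/- arXiv:2512.20503 — 5 statements merged into one kernel-verified Lean document; each statement's English description precedes it below -/
import Mathlib

section
/- Let 𝒳 be a set, d > 0, C₁ > 0 and B > 0. Let (λ_j)_{j≥1} be nonnegative reals with λ_j ≤ C₁ j^{2/d} for all j ≥ 1, and let u_j : 𝒳 → ℝ be functions such that for every x ∈ 𝒳 and every t ∈ (0,1], the series Σ_{j≥1} e^{−t λ_j} u_j(x)² converges and satisfies Σ_{j≥1} e^{−t λ_j} u_j(x)² ≤ B t^{−d/2}. Then there exists a constant K > 0, depending only on B, C₁ and d (one may take K = e·B·max(C₁,1)^{d/2}), such that for every integer J ≥ 1 and every x ∈ 𝒳, Σ_{j=1}^J u_j(x)² ≤ K J. In particular sup_{J≥1} sup_{x∈𝒳} (1/J) Σ_{j=1}^J u_j(x)² < ∞. -/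
/-!
Fix `J ≥ 1` and evaluate the heat bound at the time `t = (M J^{2/d})⁻¹`, where `M = max C₁ 1`.
For `j ≤ J` the eigenvalue bound gives `t λ_j ≤ 1`, so `e^{-t λ_j} ≥ e⁻¹` and
`Σ_{j ≤ J} u_j(x)² ≤ e Σ_j e^{-t λ_j} u_j(x)² ≤ e B t^{-d/2} = e B M^{d/2} J`.
-/

open Real Finset

lemma sum_Icc_le_tsum_subtype {f : ℕ → ℝ} (hf : ∀ j, 1 ≤ j → 0 ≤ f j)
    (hsum : Summable (fun j : {k : ℕ // 1 ≤ k} => f j)) (J : ℕ) :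
    ∑ j ∈ Icc 1 J, f j ≤ ∑' j : {k : ℕ // 1 ≤ k}, f j := by
  have hsub : ∑ j ∈ (Icc 1 J).subtype (fun k => 1 ≤ k), f j = ∑ j ∈ Icc 1 J, f j := by
    rw [sum_subtype_eq_sum_filter, filter_true_of_mem fun j hj => (mem_Icc.mp hj).1]
  rw [← hsub]
  exact hsum.sum_le_tsum _ fun j _ => hf j j.2

lemma sum_le_exp_one_mul_sum_exp_neg {s : Finset ℕ} {a lam : ℕ → ℝ} {t : ℝ}
    (ha : ∀ j ∈ s, 0 ≤ a j) (htlam : ∀ j ∈ s, t * lam j ≤ 1) :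
    ∑ j ∈ s, a j ≤ exp 1 * ∑ j ∈ s, exp (-t * lam j) * a j := by
  rw [mul_sum]
  refine sum_le_sum fun j hj => ?_
  have hexp : 1 ≤ exp (1 + -t * lam j) := one_le_exp (by linarith [htlam j hj])
  calc a j ≤ exp (1 + -t * lam j) * a j := le_mul_of_one_le_left (ha j hj) hexp
    _ = exp 1 * (exp (-t * lam j) * a j) := by rw [exp_add, mul_assoc]

lemma le_max_one_mul_rpow_of_le {d C l : ℝ} (hd : 0 ≤ d) {j J : ℕ}
    (hl : l ≤ C * (j : ℝ) ^ (2 / d)) (hjJ : j ≤ J) :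
    l ≤ max C 1 * (J : ℝ) ^ (2 / d) := by
  have hpow : (j : ℝ) ^ (2 / d) ≤ (J : ℝ) ^ (2 / d) :=
    rpow_le_rpow (by positivity) (by exact_mod_cast hjJ) (by positivity)
  calc l ≤ C * (j : ℝ) ^ (2 / d) := hl
    _ ≤ max C 1 * (J : ℝ) ^ (2 / d) :=
      mul_le_mul (le_max_left _ _) hpow (by positivity) (by positivity)

lemma inv_mul_rpow_two_div_rpow_neg {d M x : ℝ} (hd : d ≠ 0) (hM : 0 ≤ M) (hx : 0 ≤ x) :
    (M * x ^ (2 / d))⁻¹ ^ (-(d / 2)) = M ^ (d / 2) * x := by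
  have hexp : 2 / d * (d / 2) = 1 := by field_simp
  rw [rpow_neg (by positivity), inv_rpow (by positivity), inv_inv,
    mul_rpow hM (by positivity), ← rpow_mul hx, hexp, rpow_one]

theorem sum_Icc_le_of_heat_trace_bound {d C B : ℝ} (hd : 0 < d) {lam a : ℕ → ℝ}
    (ha : ∀ j, 0 ≤ a j) (hlam : ∀ j, 1 ≤ j → lam j ≤ C * (j : ℝ) ^ (2 / d))
    (hheat : ∀ t : ℝ, 0 < t → t ≤ 1 →
      Summable (fun j : {k : ℕ // 1 ≤ k} => exp (-t * lam j) * a j) ∧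
      ∑' j : {k : ℕ // 1 ≤ k}, exp (-t * lam j) * a j ≤ B * t ^ (-(d / 2)))
    {J : ℕ} (hJ : 1 ≤ J) :
    ∑ j ∈ Icc 1 J, a j ≤ exp 1 * B * max C 1 ^ (d / 2) * J := by
  set M := max C 1
  set t := (M * (J : ℝ) ^ (2 / d))⁻¹
  have hM : 1 ≤ M := le_max_right _ _
  have hJpow : 1 ≤ (J : ℝ) ^ (2 / d) := one_le_rpow (by exact_mod_cast hJ) (by positivity)
  have hden : 1 ≤ M * (J : ℝ) ^ (2 / d) := one_le_mul_of_one_le_of_one_le hM hJpow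
  have ht : 0 < t := inv_pos.mpr (by linarith)
  obtain ⟨hsum, hbound⟩ := hheat t ht (inv_le_one_of_one_le₀ hden)
  have htlam : ∀ j ∈ Icc 1 J, t * lam j ≤ 1 := fun j hj => by
    obtain ⟨hj1, hjJ⟩ := mem_Icc.mp hj
    calc t * lam j ≤ t * (M * (J : ℝ) ^ (2 / d)) :=
          mul_le_mul_of_nonneg_left (le_max_one_mul_rpow_of_le hd.le (hlam j hj1) hjJ) ht.le
      _ = 1 := inv_mul_cancel₀ (by linarith)
  calc ∑ j ∈ Icc 1 J, a j
      ≤ exp 1 * ∑ j ∈ Icc 1 J, exp (-t * lam j) * a j :=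
        sum_le_exp_one_mul_sum_exp_neg (fun j _ => ha j) htlam
    _ ≤ exp 1 * ∑' j : {k : ℕ // 1 ≤ k}, exp (-t * lam j) * a j := by
        gcongr
        exact sum_Icc_le_tsum_subtype (fun j _ => by have := ha j; positivity) hsum J
    _ ≤ exp 1 * (B * t ^ (-(d / 2))) := by gcongr
    _ = exp 1 * B * M ^ (d / 2) * J := by
        rw [inv_mul_rpow_two_div_rpow_neg hd.ne' (by linarith) (Nat.cast_nonneg J)]
        ring

theorem partial_sum_bound_from_heat_trace_general
    (d C₁ B : ℝ) (hd : 0 < d) (hB : 0 < B) :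
    ∃ K : ℝ, 0 < K ∧ K = Real.exp 1 * B * max C₁ 1 ^ (d / 2) ∧
      ∀ (𝒳 : Type) (lam : ℕ → ℝ),
        (∀ j : ℕ, 1 ≤ j → 0 ≤ lam j) →
        (∀ j : ℕ, 1 ≤ j → lam j ≤ C₁ * (j : ℝ) ^ (2 / d)) →
        ∀ u : ℕ → 𝒳 → ℝ,
          (∀ x : 𝒳, ∀ t : ℝ, 0 < t → t ≤ 1 →
            Summable (fun j : {k : ℕ // 1 ≤ k} =>
              Real.exp (-t * lam j.1) * (u j.1 x) ^ 2) ∧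
            (∑' j : {k : ℕ // 1 ≤ k}, Real.exp (-t * lam j.1) * (u j.1 x) ^ 2)
              ≤ B * t ^ (-(d / 2))) →
          (∀ J : ℕ, 1 ≤ J → ∀ x : 𝒳,
            (∑ j ∈ Finset.Icc 1 J, (u j x) ^ 2) ≤ K * J) ∧
          BddAbove {r : ℝ | ∃ J : ℕ, 1 ≤ J ∧ ∃ x : 𝒳,
            r = (J : ℝ)⁻¹ * ∑ j ∈ Finset.Icc 1 J, (u j x) ^ 2} := by
  refine ⟨_, by positivity, rfl, fun 𝒳 lam _ hlam u hheat => ?_⟩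
  have hpartial : ∀ J : ℕ, 1 ≤ J → ∀ x : 𝒳,
      ∑ j ∈ Icc 1 J, (u j x) ^ 2 ≤ exp 1 * B * max C₁ 1 ^ (d / 2) * J :=
    fun J hJ x => sum_Icc_le_of_heat_trace_bound hd (fun j => sq_nonneg (u j x)) hlam
      (hheat x) hJ
  refine ⟨hpartial, exp 1 * B * max C₁ 1 ^ (d / 2), ?_⟩
  rintro r ⟨J, hJ, x, rfl⟩
  rw [inv_mul_le_iff₀ (by exact_mod_cast hJ)]
  linarith [hpartial J hJ x]

/-- If `λ_j ≤ C₁ j^{2/d}` and the heat-trace-type bound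
`Σ_{j≥1} e^{−tλ_j} u_j(x)² ≤ B t^{−d/2}` holds for all `t ∈ (0,1]`, then
`Σ_{j=1}^J u_j(x)² ≤ K J` with `K = e·B·max(C₁,1)^{d/2}`; in particular the
normalized partial sums are uniformly bounded. -/
theorem partial_sum_bound_from_heat_trace
    (d C₁ B : ℝ) (hd : 0 < d) (hC₁ : 0 < C₁) (hB : 0 < B) :
    ∃ K : ℝ, 0 < K ∧ K = Real.exp 1 * B * max C₁ 1 ^ (d / 2) ∧
      ∀ (𝒳 : Type) (lam : ℕ → ℝ),
        (∀ j : ℕ, 1 ≤ j → 0 ≤ lam j) →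
        (∀ j : ℕ, 1 ≤ j → lam j ≤ C₁ * (j : ℝ) ^ (2 / d)) →
        ∀ u : ℕ → 𝒳 → ℝ,
          (∀ x : 𝒳, ∀ t : ℝ, 0 < t → t ≤ 1 →
            Summable (fun j : {k : ℕ // 1 ≤ k} =>
              Real.exp (-t * lam j.1) * (u j.1 x) ^ 2) ∧
            (∑' j : {k : ℕ // 1 ≤ k}, Real.exp (-t * lam j.1) * (u j.1 x) ^ 2)
              ≤ B * t ^ (-(d / 2))) →
          (∀ J : ℕ, 1 ≤ J → ∀ x : 𝒳,
            (∑ j ∈ Finset.Icc 1 J, (u j x) ^ 2) ≤ K * J) ∧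
          BddAbove {r : ℝ | ∃ J : ℕ, 1 ≤ J ∧ ∃ x : 𝒳,
            r = (J : ℝ)⁻¹ * ∑ j ∈ Finset.Icc 1 J, (u j x) ^ 2} :=
  partial_sum_bound_from_heat_trace_general d C₁ B hd hB
end

section
/- Let n, L ≥ 1 be integers, σ > 0, U ∈ ℝ^{n×L}, let M ∈ ℝ^{L×L} be diagonal with all diagonal entries in [0,1], and let K ∈ ℝ^{n×n} be symmetric positive semidefinite. Set A_L := σ² I_n + U M Uᵀ and A := A_L + K. Then A_L and A are invertible and Tr[ (A_L⁻¹ − A⁻¹) U M² Uᵀ − A⁻¹ K ] ≤ 0. -/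
open Matrix

private lemma psd_trace_nonneg {n : ℕ} {A : Matrix (Fin n) (Fin n) ℝ}
    (hA : A.PosSemidef) : 0 ≤ A.trace := by
  rw [Matrix.trace]
  refine Finset.sum_nonneg fun i _ => ?_
  have := hA.dotProduct_mulVec_nonneg (Pi.single i 1)
  simpa [Matrix.mulVec, dotProduct, Pi.single_apply] using this

open scoped MatrixOrder in
private lemma trace_mul_psd_nonneg {n : ℕ} {A B : Matrix (Fin n) (Fin n) ℝ}
    (hA : A.PosSemidef) (hB : B.PosSemidef) : 0 ≤ (A * B).trace := by
  have h1 : A * B = CFC.sqrt A * (CFC.sqrt A * B) := by rw [← mul_assoc, CFC.sqrt_mul_sqrt_self A hA.nonneg]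
  rw [h1, Matrix.trace_mul_comm]
  have h2 : ((CFC.sqrt A * B) * CFC.sqrt A).PosSemidef := by
    have := hB.conjTranspose_mul_mul_same (CFC.sqrt A)
    rwa [(CFC.sqrt_nonneg A).posSemidef.isHermitian.eq] at this
  exact psd_trace_nonneg h2

/-- the cross trace term `Tr[(A_L⁻¹ − A⁻¹) U M² Uᵀ − A⁻¹ K]` is
nonpositive, where `A_L = σ² I + U M Uᵀ`, `A = A_L + K`, `M` diagonal with
entries in `[0,1]` and `K` symmetric positive semidefinite. -/
theorem cross_trace_term_nonpos
    (n L : ℕ) (hn : 1 ≤ n) (hL : 1 ≤ L) (σ : ℝ) (hσ : 0 < σ)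
    (U : Matrix (Fin n) (Fin L) ℝ) (M : Matrix (Fin L) (Fin L) ℝ)
    (hMdiag : ∀ i j, i ≠ j → M i j = 0)
    (hM0 : ∀ i, 0 ≤ M i i) (hM1 : ∀ i, M i i ≤ 1)
    (K : Matrix (Fin n) (Fin n) ℝ) (hK : K.PosSemidef) :
    IsUnit (σ ^ 2 • (1 : Matrix (Fin n) (Fin n) ℝ) + U * M * Uᵀ) ∧
    IsUnit (σ ^ 2 • (1 : Matrix (Fin n) (Fin n) ℝ) + U * M * Uᵀ + K) ∧
    (((σ ^ 2 • (1 : Matrix (Fin n) (Fin n) ℝ) + U * M * Uᵀ)⁻¹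
        - (σ ^ 2 • (1 : Matrix (Fin n) (Fin n) ℝ) + U * M * Uᵀ + K)⁻¹)
        * (U * (M * M) * Uᵀ)
      - (σ ^ 2 • (1 : Matrix (Fin n) (Fin n) ℝ) + U * M * Uᵀ + K)⁻¹ * K).trace
      ≤ 0 := by
  -- basic notation
  set AL : Matrix (Fin n) (Fin n) ℝ := σ ^ 2 • (1 : Matrix (Fin n) (Fin n) ℝ) + U * M * Uᵀ
    with hALdef
  set A : Matrix (Fin n) (Fin n) ℝ := AL + K with hAdef
  -- M is diagonal
  have hMd : M = Matrix.diagonal (fun i => M i i) := by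
    ext i j
    by_cases h : i = j
    · subst h; simp
    · simp [Matrix.diagonal, h, hMdiag i j h]
  have hMpsd : M.PosSemidef := by
    rw [hMd]; exact Matrix.posSemidef_diagonal_iff.mpr hM0
  have hM2psd : (M - M * M).PosSemidef := by
    rw [hMd, Matrix.diagonal_mul_diagonal, Matrix.diagonal_sub]
    refine Matrix.posSemidef_diagonal_iff.mpr fun i => ?_
    have h0 := hM0 i; have h1 := hM1 i
    nlinarith
  have htr : (Uᵀ : Matrix (Fin L) (Fin n) ℝ) = Uᴴ :=
    (Matrix.conjTranspose_eq_transpose_of_trivial U).symm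
  have hUMU : (U * M * Uᵀ).PosSemidef := by
    rw [htr]; exact hMpsd.mul_mul_conjTranspose_same U
  have hI : (σ ^ 2 • (1 : Matrix (Fin n) (Fin n) ℝ)).PosDef := by
    rw [Matrix.smul_one_eq_diagonal]
    exact Matrix.posDef_diagonal_iff.mpr fun _ => by positivity
  have hAL : AL.PosDef := hI.add_posSemidef hUMU
  have hA : A.PosDef := hAL.add_posSemidef hK
  refine ⟨hAL.isUnit, hA.isUnit, ?_⟩
  -- inverses
  set a : Matrix (Fin n) (Fin n) ℝ := AL⁻¹ with hadef
  set b : Matrix (Fin n) (Fin n) ℝ := A⁻¹ with hbdef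
  have haAL : a * AL = 1 := Matrix.nonsing_inv_mul _ ((Matrix.isUnit_iff_isUnit_det _).mp hAL.isUnit)
  have hALa : AL * a = 1 := Matrix.mul_nonsing_inv _ ((Matrix.isUnit_iff_isUnit_det _).mp hAL.isUnit)
  have hbA : b * A = 1 := Matrix.nonsing_inv_mul _ ((Matrix.isUnit_iff_isUnit_det _).mp hA.isUnit)
  have hAb : A * b = 1 := Matrix.mul_nonsing_inv _ ((Matrix.isUnit_iff_isUnit_det _).mp hA.isUnit)
  have hKeq : K = A - AL := by rw [hAdef]; abel
  have key1 : a - b = b * K * a := by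
    rw [hKeq]
    have : b * (A - AL) * a = b * A * a - b * (AL * a) := by noncomm_ring
    rw [this, hbA, hALa, one_mul, mul_one]
  have key2 : a - b = a * K * b := by
    rw [hKeq]
    have : a * (A - AL) * b = a * (A * b) - a * AL * b := by noncomm_ring
    rw [this, hAb, haAL, one_mul, mul_one]
  -- the positive matrix P
  set X : Matrix (Fin n) (Fin n) ℝ := U * (M * M) * Uᵀ with hXdef
  set P : Matrix (Fin n) (Fin n) ℝ := AL - X with hPdef
  have hPdecomp : P = σ ^ 2 • (1 : Matrix (Fin n) (Fin n) ℝ) + U * (M - M * M) * Uᵀ := by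
    rw [hPdef, hALdef, hXdef, Matrix.mul_sub, Matrix.sub_mul]
    abel
  have hUM2 : (U * (M - M * M) * Uᵀ).PosSemidef := by
    rw [htr]; exact hM2psd.mul_mul_conjTranspose_same U
  have hP : P.PosSemidef := by
    rw [hPdecomp]; exact (hI.add_posSemidef hUM2).posSemidef
  -- rewrite the expression as a single negative trace
  have hexpr : (a - b) * X - b * K = -(b * K * a * P) := by
    rw [key1, hPdef, Matrix.mul_sub]
    have h1 : b * K * a * AL = b * K := by rw [mul_assoc (b * K) a AL, haAL, mul_one]
    rw [h1, neg_sub]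
  rw [hexpr, Matrix.trace_neg, neg_nonpos]
  -- split the trace into two nonnegative parts
  have hsplit : b * K * a * P = b * K * b * P + b * K * (a - b) * P := by noncomm_ring
  rw [hsplit, key2, Matrix.trace_add]
  -- hermitian facts
  have hbH : bᴴ = b := hA.inv.isHermitian
  have hbKb : (b * K * b).PosSemidef := by
    have := hK.mul_mul_conjTranspose_same b
    rwa [hbH] at this
  have t1 : 0 ≤ (b * K * b * P).trace := trace_mul_psd_nonneg hbKb hP
  have t2 : 0 ≤ (b * K * (a * K * b) * P).trace := by
    have e1 : b * K * (a * K * b) * P = (b * K) * (a * (K * (b * P))) := by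
      simp only [mul_assoc]
    rw [e1, Matrix.trace_mul_comm]
    have e2 : a * (K * (b * P)) * (b * K) = a * (K * (b * (P * (b * K)))) := by
      simp only [mul_assoc]
    rw [e2, Matrix.trace_mul_comm]
    have hQ : (K * (b * (P * (b * K)))).PosSemidef := by
      have := hP.conjTranspose_mul_mul_same (b * K)
      simpa only [Matrix.conjTranspose_mul, hK.isHermitian.eq, hbH, mul_assoc] using this
    exact trace_mul_psd_nonneg hQ hAL.inv.posSemidef
  linarith
end

section
/- Let 𝒳 be a set, and let p > 0, τ > 0, c₁ > 0, B > 0. Let (s_j)_{j≥1} be positive reals with s_j ≥ c₁ j^{−1/p} for all j ≥ 1, and let e_j : 𝒳 → ℝ be functions such that for every λ > 0 and every x ∈ 𝒳 the series Σ_{j≥1} (s_j/(s_j+λ)) e_j(x)² converges and satisfies Σ_{j≥1} (s_j/(s_j+λ)) e_j(x)² ≤ B² λ^{−τ}. Then for every integer J ≥ 1 and every x ∈ 𝒳, Σ_{j=1}^J e_j(x)² ≤ 2 c₁^{−τ} B² J^{τ/p}. -/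
/-!
Take `λ = c₁ J^{-1/p}`. For `j ≤ J` the lower bound on `s` gives `s_j ≥ λ`, so the weight
`s_j / (s_j + λ)` is at least `1/2`; hence the partial sum up to `J` is at most twice the
weighted series, i.e. at most `2 B² λ^{-τ} = 2 c₁^{-τ} B² J^{τ/p}`.
-/

open Finset

lemma le_two_mul_div_add_mul {s lam a : ℝ} (hlam : 0 < lam) (hle : lam ≤ s) (ha : 0 ≤ a) :
    a ≤ 2 * (s / (s + lam) * a) := by
  have hden : 0 < s + lam := by linarith
  have hhalf : 1 / 2 ≤ s / (s + lam) := by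
    rw [div_le_div_iff₀ two_pos hden]
    linarith
  nlinarith [mul_le_mul_of_nonneg_right hhalf ha]

lemma sum_le_tsum_subtype {α : Type*} {P : α → Prop} {f : α → ℝ} (S : Finset α) (hS : ∀ j ∈ S, P j)
    (hf : ∀ j, P j → 0 ≤ f j) (hsum : Summable fun j : Subtype P => f j) :
    ∑ j ∈ S, f j ≤ ∑' j : Subtype P, f j := by
  classical
  rw [← sum_subtype_of_mem f hS]
  exact hsum.sum_le_tsum _ fun j _ => hf j j.2

lemma mul_rpow_neg_inv_rpow_neg {c J : ℝ} (p τ : ℝ) (hc : 0 ≤ c) (hJ : 0 ≤ J) :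
    (c * J ^ (-(1 / p))) ^ (-τ) = c ^ (-τ) * J ^ (τ / p) := by
  rw [Real.mul_rpow hc (Real.rpow_nonneg hJ _), ← Real.rpow_mul hJ]
  ring_nf

theorem eigenfunction_partial_sum_bound_general
    (𝒳 : Type) (p τ c₁ B : ℝ) (hp : 0 < p) (hc₁ : 0 < c₁)
    (s : ℕ → ℝ)
    (hslow : ∀ j : ℕ, 1 ≤ j → c₁ * (j : ℝ) ^ (-(1 / p)) ≤ s j)
    (e : ℕ → 𝒳 → ℝ)
    (hser : ∀ lam : ℝ, 0 < lam → ∀ x : 𝒳,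
      Summable (fun j : {k : ℕ // 1 ≤ k} =>
        s j.1 / (s j.1 + lam) * (e j.1 x) ^ 2) ∧
      (∑' j : {k : ℕ // 1 ≤ k}, s j.1 / (s j.1 + lam) * (e j.1 x) ^ 2)
        ≤ B ^ 2 * lam ^ (-τ)) :
    ∀ J : ℕ, 1 ≤ J → ∀ x : 𝒳,
      (∑ j ∈ Finset.Icc 1 J, (e j x) ^ 2)
        ≤ 2 * c₁ ^ (-τ) * B ^ 2 * (J : ℝ) ^ (τ / p) := by
  intro J hJ x
  set lam := c₁ * (J : ℝ) ^ (-(1 / p))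
  have hJpos : (0 : ℝ) < J := by exact_mod_cast hJ
  have hlam : 0 < lam := by positivity
  have hlam_le : ∀ j, 1 ≤ j → j ≤ J → lam ≤ s j := by
    intro j hj hjJ
    have hanti : (J : ℝ) ^ (-(1 / p)) ≤ (j : ℝ) ^ (-(1 / p)) :=
      Real.rpow_le_rpow_of_nonpos (by exact_mod_cast hj) (by exact_mod_cast hjJ)
        (by simp [hp.le])
    exact (mul_le_mul_of_nonneg_left hanti hc₁.le).trans (hslow j hj)
  obtain ⟨hsum, hbound⟩ := hser lam hlam x
  calc ∑ j ∈ Icc 1 J, e j x ^ 2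
      ≤ ∑ j ∈ Icc 1 J, 2 * (s j / (s j + lam) * e j x ^ 2) := by
        refine sum_le_sum fun j hj => ?_
        rw [mem_Icc] at hj
        exact le_two_mul_div_add_mul hlam (hlam_le j hj.1 hj.2) (sq_nonneg _)
    _ = 2 * ∑ j ∈ Icc 1 J, s j / (s j + lam) * e j x ^ 2 := (mul_sum ..).symm
    _ ≤ 2 * (B ^ 2 * lam ^ (-τ)) := by
        gcongr
        refine (sum_le_tsum_subtype _ (fun j hj => (mem_Icc.mp hj).1) (fun j hj => ?_)
          hsum).trans hbound
        have hsj : 0 < s j := lt_of_lt_of_le (by positivity) (hslow j hj)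
        positivity
    _ = 2 * c₁ ^ (-τ) * B ^ 2 * (J : ℝ) ^ (τ / p) := by
        rw [mul_rpow_neg_inv_rpow_neg p τ hc₁.le hJpos.le]
        ring

/-- bound on partial sums of squared eigenfunctions from the
effective-dimension-type bound `Σ_j (s_j/(s_j+λ)) e_j(x)² ≤ B² λ^{−τ}`. -/
theorem eigenfunction_partial_sum_bound
    (𝒳 : Type) (p τ c₁ B : ℝ) (hp : 0 < p) (hτ : 0 < τ) (hc₁ : 0 < c₁) (hB : 0 < B)
    (s : ℕ → ℝ) (hspos : ∀ j : ℕ, 1 ≤ j → 0 < s j)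
    (hslow : ∀ j : ℕ, 1 ≤ j → c₁ * (j : ℝ) ^ (-(1 / p)) ≤ s j)
    (e : ℕ → 𝒳 → ℝ)
    (hser : ∀ lam : ℝ, 0 < lam → ∀ x : 𝒳,
      Summable (fun j : {k : ℕ // 1 ≤ k} =>
        s j.1 / (s j.1 + lam) * (e j.1 x) ^ 2) ∧
      (∑' j : {k : ℕ // 1 ≤ k}, s j.1 / (s j.1 + lam) * (e j.1 x) ^ 2)
        ≤ B ^ 2 * lam ^ (-τ)) :
    ∀ J : ℕ, 1 ≤ J → ∀ x : 𝒳,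
      (∑ j ∈ Finset.Icc 1 J, (e j x) ^ 2)
        ≤ 2 * c₁ ^ (-τ) * B ^ 2 * (J : ℝ) ^ (τ / p) :=
  eigenfunction_partial_sum_bound_general 𝒳 p τ c₁ B hp hc₁ s hslow e hser
end

section
/- Let α, d, C, Λ > 0, let S be a countable index set, let (λ_j)_{j∈S} be nonnegative reals and (a_j)_{j∈S} nonnegative reals. Suppose that for every t > 0 the series Σ_{j∈S} e^{−t λ_j} a_j converges and satisfies Σ_{j∈S} e^{−t λ_j} a_j ≤ C e^{−tΛ/2} t^{−d/2}. Then Σ_{j∈S} (1 + λ_j)^{−(α + d/2)} a_j ≤ C · (Γ(α)/Γ(α + d/2)) · (1 + Λ/2)^{−α}, where Γ denotes the Gamma function. -/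
open MeasureTheory Set

lemma gammaIntAux {p b : ℝ} (hp : 0 < p) (hb : 0 < b) :
    ∫⁻ t in Set.Ioi (0:ℝ), ENNReal.ofReal (t ^ (p-1) * Real.exp (-(b * t)))
      = ENNReal.ofReal ((1/b) ^ p * Real.Gamma p) := by
  have hint : IntegrableOn (fun t : ℝ => t ^ (p-1) * Real.exp (-(b * t))) (Ioi 0) := by
    have := integrableOn_rpow_mul_exp_neg_mul_rpow (by linarith : (-1:ℝ) < p - 1) one_pos hb
    simpa [Real.rpow_one, neg_mul] using this
  have hnn : 0 ≤ᵐ[volume.restrict (Ioi (0:ℝ))] fun t : ℝ => t ^ (p-1) * Real.exp (-(b * t)) := by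
    filter_upwards [ae_restrict_mem measurableSet_Ioi] with t ht
    exact mul_nonneg (Real.rpow_nonneg (le_of_lt ht) _) (Real.exp_pos _).le
  rw [← Real.integral_rpow_mul_exp_neg_mul_Ioi hp hb,
    ← MeasureTheory.ofReal_integral_eq_lintegral_ofReal hint hnn]

/-- from the spectrally-localized heat-trace bound
`Σ_j e^{−tλ_j} a_j ≤ C e^{−tΛ/2} t^{−d/2}` (all `t > 0`) one deduces
`Σ_j (1+λ_j)^{−(α+d/2)} a_j ≤ C (Γ(α)/Γ(α+d/2)) (1+Λ/2)^{−α}`. -/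
theorem weighted_sum_bound_from_heat_bound
    (α d C Λ : ℝ) (hα : 0 < α) (hd : 0 < d) (hC : 0 < C) (hΛ : 0 < Λ)
    (S : Type) [Countable S] (lam a : S → ℝ)
    (hlam : ∀ j, 0 ≤ lam j) (ha : ∀ j, 0 ≤ a j)
    (hheat : ∀ t : ℝ, 0 < t →
      Summable (fun j : S => Real.exp (-t * lam j) * a j) ∧
      (∑' j : S, Real.exp (-t * lam j) * a j)
        ≤ C * Real.exp (-t * Λ / 2) * t ^ (-(d / 2))) :
    Summable (fun j : S => (1 + lam j) ^ (-(α + d / 2)) * a j) ∧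
    (∑' j : S, (1 + lam j) ^ (-(α + d / 2)) * a j)
      ≤ C * (Real.Gamma α / Real.Gamma (α + d / 2)) * (1 + Λ / 2) ^ (-α) := by
  set s : ℝ := α + d / 2 with hs_def
  have hs : 0 < s := by positivity
  have hΓs : 0 < Real.Gamma s := Real.Gamma_pos_of_pos hs
  have hΓα : 0 < Real.Gamma α := Real.Gamma_pos_of_pos hα
  set g : S → ℝ := fun j => (1 + lam j) ^ (-s) * a j with hg_def
  have hg_nonneg : ∀ j, 0 ≤ g j := fun j =>
    mul_nonneg (Real.rpow_nonneg (by linarith [hlam j]) _) (ha j)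
  set F : S → ℝ → ENNReal := fun j t =>
    ENNReal.ofReal (a j / Real.Gamma s * (t ^ (s-1) * Real.exp (-((1 + lam j) * t)))) with hF_def
  -- Step A : the integral representation of each weight
  have stepA : ∀ j, ENNReal.ofReal (g j) = ∫⁻ t in Ioi (0:ℝ), F j t := by
    intro j
    symm
    have hb : (0:ℝ) < 1 + lam j := by linarith [hlam j]
    have hcnn : (0:ℝ) ≤ a j / Real.Gamma s := div_nonneg (ha j) hΓs.le
    calc ∫⁻ t in Ioi (0:ℝ), F j t
        = ∫⁻ t in Ioi (0:ℝ), ENNReal.ofReal (a j / Real.Gamma s) *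
            ENNReal.ofReal (t ^ (s-1) * Real.exp (-((1 + lam j) * t))) := by
          simp_rw [hF_def, ENNReal.ofReal_mul hcnn]
      _ = ENNReal.ofReal (a j / Real.Gamma s) *
            ∫⁻ t in Ioi (0:ℝ), ENNReal.ofReal (t ^ (s-1) * Real.exp (-((1 + lam j) * t))) :=
          lintegral_const_mul' _ _ ENNReal.ofReal_ne_top
      _ = ENNReal.ofReal (a j / Real.Gamma s) *
            ENNReal.ofReal ((1/(1 + lam j)) ^ s * Real.Gamma s) := by
          rw [gammaIntAux hs hb]
      _ = ENNReal.ofReal (g j) := by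
          rw [← ENNReal.ofReal_mul hcnn]
          congr 1
          rw [hg_def]
          have h1 : ((1:ℝ)/(1 + lam j)) ^ s = (1 + lam j) ^ (-s) := by
            rw [one_div, Real.inv_rpow hb.le, ← Real.rpow_neg hb.le]
          field_simp [h1]
          rw [← h1, one_div]
  -- Step C : pointwise bound on the inner sum
  have stepC : ∀ t ∈ Ioi (0:ℝ), (∑' j, F j t) ≤
      ENNReal.ofReal (C / Real.Gamma s * (t ^ (α-1) * Real.exp (-((1 + Λ/2) * t)))) := by
    intro t ht
    have ht0 : (0:ℝ) < t := ht
    set k : ℝ := t ^ (s-1) * Real.exp (-t) / Real.Gamma s with hk_def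
    have hk_nonneg : 0 ≤ k :=
      div_nonneg (mul_nonneg (Real.rpow_nonneg ht0.le _) (Real.exp_pos _).le) hΓs.le
    have hFk : ∀ j, F j t = ENNReal.ofReal (k * (Real.exp (-t * lam j) * a j)) := by
      intro j
      have h : -((1 + lam j) * t) = -t + -t * lam j := by ring
      simp only [hF_def, h, Real.exp_add, hk_def]
      congr 1
      ring
    calc (∑' j, F j t)
        = ∑' j, ENNReal.ofReal k * ENNReal.ofReal (Real.exp (-t * lam j) * a j) := by
          simp_rw [hFk, ENNReal.ofReal_mul hk_nonneg]
      _ = ENNReal.ofReal k * ∑' j, ENNReal.ofReal (Real.exp (-t * lam j) * a j) :=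
          ENNReal.tsum_mul_left
      _ = ENNReal.ofReal k * ENNReal.ofReal (∑' j, Real.exp (-t * lam j) * a j) := by
          rw [← ENNReal.ofReal_tsum_of_nonneg
            (fun j => mul_nonneg (Real.exp_pos _).le (ha j)) (hheat t ht0).1]
      _ ≤ ENNReal.ofReal k * ENNReal.ofReal (C * Real.exp (-t * Λ / 2) * t ^ (-(d/2))) :=
          mul_le_mul_right (ENNReal.ofReal_le_ofReal (hheat t ht0).2) _
      _ = ENNReal.ofReal (C / Real.Gamma s * (t ^ (α-1) * Real.exp (-((1 + Λ/2) * t)))) := by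
          rw [← ENNReal.ofReal_mul hk_nonneg]
          congr 1
          have h1 : t ^ (s-1) * t ^ (-(d/2)) = t ^ (α-1) := by
            rw [← Real.rpow_add ht0]
            congr 1
            rw [hs_def]; ring
          have h2 : Real.exp (-t) * Real.exp (-t * Λ / 2) = Real.exp (-((1 + Λ/2) * t)) := by
            rw [← Real.exp_add]
            congr 1
            ring
          rw [hk_def, ← h1, ← h2]
          ring
  -- Step D : total bound in ℝ≥0∞
  have hb2 : (0:ℝ) < 1 + Λ/2 := by linarith
  have stepD : (∑' j, ENNReal.ofReal (g j)) ≤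
      ENNReal.ofReal (C * (Real.Gamma α / Real.Gamma s) * (1 + Λ/2) ^ (-α)) := by
    have hmeas : ∀ j, AEMeasurable (F j) (volume.restrict (Ioi (0:ℝ))) := by
      intro j
      rw [hF_def]
      fun_prop
    calc (∑' j, ENNReal.ofReal (g j))
        = ∑' j, ∫⁻ t in Ioi (0:ℝ), F j t := by simp_rw [stepA]
      _ = ∫⁻ t in Ioi (0:ℝ), ∑' j, F j t := (lintegral_tsum hmeas).symm
      _ ≤ ∫⁻ t in Ioi (0:ℝ),
            ENNReal.ofReal (C / Real.Gamma s * (t ^ (α-1) * Real.exp (-((1 + Λ/2) * t)))) := by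
          refine lintegral_mono_ae ?_
          filter_upwards [ae_restrict_mem measurableSet_Ioi] with t ht
          exact stepC t ht
      _ = ENNReal.ofReal (C / Real.Gamma s) *
            ∫⁻ t in Ioi (0:ℝ), ENNReal.ofReal (t ^ (α-1) * Real.exp (-((1 + Λ/2) * t))) := by
          simp_rw [ENNReal.ofReal_mul (by positivity : (0:ℝ) ≤ C / Real.Gamma s)]
          exact lintegral_const_mul' _ _ ENNReal.ofReal_ne_top
      _ = ENNReal.ofReal (C / Real.Gamma s) *
            ENNReal.ofReal ((1/(1 + Λ/2)) ^ α * Real.Gamma α) := by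
          rw [gammaIntAux hα hb2]
      _ = ENNReal.ofReal (C * (Real.Gamma α / Real.Gamma s) * (1 + Λ/2) ^ (-α)) := by
          rw [← ENNReal.ofReal_mul (by positivity : (0:ℝ) ≤ C / Real.Gamma s)]
          congr 1
          have h1 : ((1:ℝ)/(1 + Λ/2)) ^ α = (1 + Λ/2) ^ (-α) := by
            rw [one_div, Real.inv_rpow hb2.le, ← Real.rpow_neg hb2.le]
          rw [h1]
          field_simp
  -- Step E : back to ℝ
  have hne : (∑' j, ENNReal.ofReal (g j)) ≠ ⊤ :=
    ne_top_of_le_ne_top ENNReal.ofReal_ne_top stepD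
  have hsum : Summable g := by
    have := ENNReal.summable_toReal hne
    refine this.congr fun j => ?_
    rw [ENNReal.toReal_ofReal (hg_nonneg j)]
  refine ⟨hsum, ?_⟩
  have heq : (∑' j, g j) = (∑' j, ENNReal.ofReal (g j)).toReal := by
    rw [ENNReal.tsum_toReal_eq (fun j => ENNReal.ofReal_ne_top)]
    exact tsum_congr fun j => (ENNReal.toReal_ofReal (hg_nonneg j)).symm
  rw [heq]
  calc (∑' j, ENNReal.ofReal (g j)).toReal
      ≤ (ENNReal.ofReal (C * (Real.Gamma α / Real.Gamma s) * (1 + Λ/2) ^ (-α))).toReal :=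
        ENNReal.toReal_mono ENNReal.ofReal_ne_top stepD
    _ = C * (Real.Gamma α / Real.Gamma s) * (1 + Λ/2) ^ (-α) :=
        ENNReal.toReal_ofReal (by positivity)
end

section
/- Let 𝒳 be a nonempty set and let B(𝒳) be the space of bounded real functions on 𝒳 with the supremum norm ‖·‖_∞. Let (u_j)_{j≥1} ⊆ B(𝒳), let (λ_j)_{j≥1} be a nondecreasing sequence of nonnegative reals, and let s, d, c₁, c₂ > 0 and j₀ ≥ 1 be such that c₁ j^{2/d} ≤ λ_j ≤ c₂ j^{2/d} for all j ≥ j₀. For f ∈ B(𝒳), Λ ≥ 1 and integer J ≥ 1 define ℰ^Λ(f)_∞ := inf{‖f−g‖_∞ : g ∈ span{u_j : λ_j ≤ Λ}} and ℰ_J(f)_∞ := inf{‖f−g‖_∞ : g ∈ span{u₁,…,u_J}}. Then there exist constants K₁, K₂ > 0, depending only on s, d, c₁, c₂ and j₀, such that for every f ∈ B(𝒳), K₁ ( ‖f‖_∞ + sup_{J≥1} J^{s/d} ℰ_J(f)_∞ ) ≤ ‖f‖_∞ + sup_{Λ≥1} Λ^{s/2} ℰ^Λ(f)_∞ ≤ K₂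 ( ‖f‖_∞ + sup_{J≥1} J^{s/d} ℰ_J(f)_∞ ), where the suprema are taken in [0,∞]. -/
/-- Supremum norm of a real function (as a real-valued `iSup`). -/
noncomputable def supNorm {𝒳 : Type} (f : 𝒳 → ℝ) : ℝ := ⨆ x, |f x|

/-- Best uniform approximation error of `f` by the span of `{u_j : 1 ≤ j ≤ J}`. -/
noncomputable def errJ {𝒳 : Type} (u : ℕ → 𝒳 → ℝ) (J : ℕ) (f : 𝒳 → ℝ) : ℝ :=
  sInf { r : ℝ | ∃ g ∈ Submodule.span ℝ {h : 𝒳 → ℝ | ∃ j, 1 ≤ j ∧ j ≤ J ∧ h = u j},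
    r = supNorm (f - g) }

/-- Best uniform approximation error of `f` by the span of `{u_j : λ_j ≤ Λ, j ≥ 1}`. -/
noncomputable def errLam {𝒳 : Type} (u : ℕ → 𝒳 → ℝ) (lam : ℕ → ℝ) (Λ : ℝ)
    (f : 𝒳 → ℝ) : ℝ :=
  sInf { r : ℝ | ∃ g ∈ Submodule.span ℝ {h : 𝒳 → ℝ | ∃ j, 1 ≤ j ∧ lam j ≤ Λ ∧ h = u j},
    r = supNorm (f - g) }

section Aux
variable {𝒳 : Type}

lemma supNorm_nonneg (f : 𝒳 → ℝ) : 0 ≤ supNorm f :=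
  Real.iSup_nonneg fun _ => abs_nonneg _

lemma errset_bdd (S : Set (𝒳 → ℝ)) (f : 𝒳 → ℝ) :
    BddBelow { r : ℝ | ∃ g ∈ Submodule.span ℝ S, r = supNorm (f - g) } :=
  ⟨0, by rintro r ⟨g, -, rfl⟩; exact supNorm_nonneg _⟩

lemma errset_mem (S : Set (𝒳 → ℝ)) (f : 𝒳 → ℝ) :
    supNorm f ∈ { r : ℝ | ∃ g ∈ Submodule.span ℝ S, r = supNorm (f - g) } :=
  ⟨0, Submodule.zero_mem _, by rw [sub_zero]⟩

lemma errset_nonneg (S : Set (𝒳 → ℝ)) (f : 𝒳 → ℝ) :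
    0 ≤ sInf { r : ℝ | ∃ g ∈ Submodule.span ℝ S, r = supNorm (f - g) } := by
  apply Real.sInf_nonneg
  rintro r ⟨g, -, rfl⟩
  exact supNorm_nonneg _

lemma errset_le_supNorm (S : Set (𝒳 → ℝ)) (f : 𝒳 → ℝ) :
    sInf { r : ℝ | ∃ g ∈ Submodule.span ℝ S, r = supNorm (f - g) } ≤ supNorm f :=
  csInf_le (errset_bdd S f) (errset_mem S f)

lemma errset_mono {S T : Set (𝒳 → ℝ)} (h : S ⊆ T) (f : 𝒳 → ℝ) :
    sInf { r : ℝ | ∃ g ∈ Submodule.span ℝ T, r = supNorm (f - g) }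
      ≤ sInf { r : ℝ | ∃ g ∈ Submodule.span ℝ S, r = supNorm (f - g) } :=
  csInf_le_csInf (errset_bdd T f) ⟨supNorm f, errset_mem S f⟩
    (by rintro r ⟨g, hg, rfl⟩; exact ⟨g, Submodule.span_mono h hg, rfl⟩)

lemma errJ_nonneg (u : ℕ → 𝒳 → ℝ) (J : ℕ) (f : 𝒳 → ℝ) : 0 ≤ errJ u J f :=
  errset_nonneg _ f

lemma errLam_nonneg (u : ℕ → 𝒳 → ℝ) (lam : ℕ → ℝ) (Λ : ℝ) (f : 𝒳 → ℝ) :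
    0 ≤ errLam u lam Λ f :=
  errset_nonneg _ f

lemma errJ_le_supNorm (u : ℕ → 𝒳 → ℝ) (J : ℕ) (f : 𝒳 → ℝ) : errJ u J f ≤ supNorm f :=
  errset_le_supNorm _ f

lemma errLam_le_supNorm (u : ℕ → 𝒳 → ℝ) (lam : ℕ → ℝ) (Λ : ℝ) (f : 𝒳 → ℝ) :
    errLam u lam Λ f ≤ supNorm f :=
  errset_le_supNorm _ f

lemma errLam_le_errJ (u : ℕ → 𝒳 → ℝ) (lam : ℕ → ℝ) {Λ : ℝ} {J : ℕ} (f : 𝒳 → ℝ)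
    (h : ∀ j, 1 ≤ j → j ≤ J → lam j ≤ Λ) : errLam u lam Λ f ≤ errJ u J f :=
  errset_mono (fun g hg => by
    obtain ⟨j, h1, h2, h3⟩ := hg; exact ⟨j, h1, h j h1 h2, h3⟩) f

lemma errJ_le_errLam (u : ℕ → 𝒳 → ℝ) (lam : ℕ → ℝ) {Λ : ℝ} {J : ℕ} (f : 𝒳 → ℝ)
    (h : ∀ j, 1 ≤ j → lam j ≤ Λ → j ≤ J) : errJ u J f ≤ errLam u lam Λ f :=
  errset_mono (fun g hg => by
    obtain ⟨j, h1, h2, h3⟩ := hg; exact ⟨j, h1, h j h1 h2, h3⟩) f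

end Aux

/-- equivalence of the two Besov-type quantities
`‖f‖_∞ + sup_{Λ≥1} Λ^{s/2} ℰ^Λ(f)_∞` and `‖f‖_∞ + sup_{J≥1} J^{s/d} ℰ_J(f)_∞`,
uniformly over bounded `f`, with constants depending only on `s, d, c₁, c₂, j₀`.
The suprema are taken in `[0,∞]`. -/
theorem besov_norm_equivalence
    (s d c₁ c₂ : ℝ) (j₀ : ℕ) (hs : 0 < s) (hd : 0 < d)
    (hc₁ : 0 < c₁) (hc₂ : 0 < c₂) (hj₀ : 1 ≤ j₀) :
    ∃ K₁ K₂ : ℝ, 0 < K₁ ∧ 0 < K₂ ∧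
      ∀ (𝒳 : Type) [Nonempty 𝒳] (u : ℕ → 𝒳 → ℝ),
        (∀ j, ∃ M : ℝ, ∀ x, |u j x| ≤ M) →
      ∀ lam : ℕ → ℝ,
        (∀ j k, 1 ≤ j → j ≤ k → lam j ≤ lam k) →
        (∀ j, 1 ≤ j → 0 ≤ lam j) →
        (∀ j, j₀ ≤ j → c₁ * (j : ℝ) ^ (2 / d) ≤ lam j ∧ lam j ≤ c₂ * (j : ℝ) ^ (2 / d)) →
      ∀ f : 𝒳 → ℝ, (∃ M : ℝ, ∀ x, |f x| ≤ M) →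
        ENNReal.ofReal K₁ *
            (ENNReal.ofReal (supNorm f) +
              ⨆ (J : ℕ) (_ : 1 ≤ J), ENNReal.ofReal ((J : ℝ) ^ (s / d) * errJ u J f))
          ≤ ENNReal.ofReal (supNorm f) +
              ⨆ (Λ : ℝ) (_ : 1 ≤ Λ), ENNReal.ofReal (Λ ^ (s / 2) * errLam u lam Λ f) ∧
        ENNReal.ofReal (supNorm f) +
            ⨆ (Λ : ℝ) (_ : 1 ≤ Λ), ENNReal.ofReal (Λ ^ (s / 2) * errLam u lam Λ f)
          ≤ ENNReal.ofReal K₂ *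
            (ENNReal.ofReal (supNorm f) +
              ⨆ (J : ℕ) (_ : 1 ≤ J), ENNReal.ofReal ((J : ℝ) ^ (s / d) * errJ u J f)) := by
  have hd' : d ≠ 0 := hd.ne'
  set x₀ : ℝ := (2 / c₁) ^ (d / 2) with hx₀
  have hx₀nn : 0 ≤ x₀ := Real.rpow_nonneg (by positivity) _
  set N : ℕ := max j₀ (⌈x₀⌉₊ + 1) with hNdef
  have hN1 : 1 ≤ N := le_trans hj₀ (le_max_left _ _)
  have hNR : (1 : ℝ) ≤ (N : ℝ) := by exact_mod_cast hN1
  set Kb : ℝ := (c₁ / 2) ^ (s / 2) with hKb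
  have hKbpos : 0 < Kb := Real.rpow_pos_of_pos (by linarith) _
  set KN : ℝ := ((N : ℝ) ^ (s / d))⁻¹ with hKN
  have hNpow : (0:ℝ) < (N : ℝ) ^ (s / d) := Real.rpow_pos_of_pos (by linarith) _
  have hKNpos : 0 < KN := inv_pos.2 hNpow
  set K' : ℝ := min 1 (min Kb KN) with hK'
  have hK'pos : 0 < K' := lt_min one_pos (lt_min hKbpos hKNpos)
  have hK'le1 : K' ≤ 1 := min_le_left _ _
  set C₀ : ℝ := max 1 (c₂ * (j₀ : ℝ) ^ (2 / d)) with hC₀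
  have hC₀1 : (1 : ℝ) ≤ C₀ := le_max_left _ _
  have hC₀pow : (0:ℝ) ≤ C₀ ^ (s / 2) := Real.rpow_nonneg (by linarith) _
  set Cb : ℝ := (c₂ * 2 ^ (2 / d)) ^ (s / 2) with hCb
  have hCbpos : 0 < Cb := Real.rpow_pos_of_pos (by positivity) _
  refine ⟨K' / 2, 1 + C₀ ^ (s / 2) + Cb, by positivity, by positivity, ?_⟩
  intro 𝒳 _ u _ lam hmono hnn hlam f _
  set a := ENNReal.ofReal (supNorm f) with ha
  set SJ := ⨆ (J : ℕ) (_ : 1 ≤ J), ENNReal.ofReal ((J : ℝ) ^ (s / d) * errJ u J f) with hSJ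
  set SL := ⨆ (Λ : ℝ) (_ : 1 ≤ Λ), ENNReal.ofReal (Λ ^ (s / 2) * errLam u lam Λ f) with hSL
  constructor
  · -- first inequality : ofReal (K'/2) * (a + SJ) ≤ a + SL
    have key1 : ∀ J : ℕ, 1 ≤ J →
        ENNReal.ofReal K' * ENNReal.ofReal ((J : ℝ) ^ (s / d) * errJ u J f) ≤ a + SL := by
      intro J hJ1
      have hJR : (1 : ℝ) ≤ (J : ℝ) := by exact_mod_cast hJ1
      rw [← ENNReal.ofReal_mul hK'pos.le]
      by_cases hc : J ≤ N
      · -- small J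
        have hJN : (J : ℝ) ≤ (N : ℝ) := by exact_mod_cast hc
        have h1 : (J : ℝ) ^ (s / d) ≤ (N : ℝ) ^ (s / d) :=
          Real.rpow_le_rpow (by linarith) hJN (by positivity)
        have h2 : (J : ℝ) ^ (s / d) * errJ u J f ≤ (N : ℝ) ^ (s / d) * supNorm f :=
          mul_le_mul h1 (errJ_le_supNorm u J f) (errJ_nonneg u J f) (by positivity)
        have hK'KN : K' ≤ KN := le_trans (min_le_right _ _) (min_le_right _ _)
        have h3 : K' * ((J : ℝ) ^ (s / d) * errJ u J f) ≤ supNorm f := by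
          calc K' * ((J : ℝ) ^ (s / d) * errJ u J f)
              ≤ KN * ((N : ℝ) ^ (s / d) * supNorm f) :=
                mul_le_mul hK'KN h2
                  (mul_nonneg (by positivity) (errJ_nonneg u J f)) hKNpos.le
            _ = supNorm f := by
                rw [hKN, ← mul_assoc, inv_mul_cancel₀ hNpow.ne', one_mul]
        exact le_trans (ENNReal.ofReal_le_ofReal h3) le_self_add
      · -- large J
        push_neg at hc
        have hj₀J1 : j₀ ≤ J + 1 := by
          have := le_max_left j₀ (⌈x₀⌉₊ + 1); omega
        have hceil : x₀ ≤ (⌈x₀⌉₊ : ℝ) := Nat.le_ceil _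
        have hNx : (⌈x₀⌉₊ + 1 : ℕ) ≤ N := le_max_right _ _
        have hx₀J : x₀ < (J : ℝ) + 1 := by
          have h1 : ((⌈x₀⌉₊ : ℕ) : ℝ) + 1 ≤ (N : ℝ) := by exact_mod_cast hNx
          have h2 : (N : ℝ) < (J : ℝ) := by exact_mod_cast hc
          linarith
        have hgt : 2 / c₁ < ((J : ℝ) + 1) ^ (2 / d) := by
          have h1 : x₀ ^ (2 / d) < ((J : ℝ) + 1) ^ (2 / d) :=
            Real.rpow_lt_rpow hx₀nn hx₀J (by positivity)
          have h2 : x₀ ^ (2 / d) = 2 / c₁ := by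
            rw [hx₀, ← Real.rpow_mul (by positivity),
              show d / 2 * (2 / d) = 1 by field_simp, Real.rpow_one]
          linarith
        have hlow : c₁ * ((J : ℝ) + 1) ^ (2 / d) ≤ lam (J + 1) := by
          have := (hlam (J + 1) hj₀J1).1
          push_cast at this
          exact this
        have h2lam : 2 < lam (J + 1) := by
          have h1 : 2 < c₁ * ((J : ℝ) + 1) ^ (2 / d) := by
            rw [div_lt_iff₀ hc₁] at hgt
            linarith [mul_comm (((J : ℝ) + 1) ^ (2 / d)) c₁]
          linarith
        set Λ : ℝ := lam (J + 1) / 2 with hΛdef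
        have hΛ1 : 1 ≤ Λ := by rw [hΛdef]; linarith
        have herr : errJ u J f ≤ errLam u lam Λ f := by
          apply errJ_le_errLam
          intro j h1 hle
          by_contra hcon
          push_neg at hcon
          have hmj : lam (J + 1) ≤ lam j := hmono (J + 1) j (by omega) (by omega)
          rw [hΛdef] at hle
          linarith
        have hstep : (c₁ / 2) * (J : ℝ) ^ (2 / d) ≤ Λ := by
          have h1 : (J : ℝ) ^ (2 / d) ≤ ((J : ℝ) + 1) ^ (2 / d) :=
            Real.rpow_le_rpow (by linarith) (by linarith) (by positivity)
          rw [hΛdef]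
          have h2 : c₁ * (J : ℝ) ^ (2 / d) ≤ c₁ * ((J : ℝ) + 1) ^ (2 / d) :=
            mul_le_mul_of_nonneg_left h1 hc₁.le
          linarith
        have hpow : Kb * (J : ℝ) ^ (s / d) ≤ Λ ^ (s / 2) := by
          have hbase : (0:ℝ) ≤ (c₁ / 2) * (J : ℝ) ^ (2 / d) := by positivity
          calc Kb * (J : ℝ) ^ (s / d)
              = ((c₁ / 2) * (J : ℝ) ^ (2 / d)) ^ (s / 2) := by
                rw [Real.mul_rpow (by linarith) (by positivity),
                  ← Real.rpow_mul (Nat.cast_nonneg J),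
                  show 2 / d * (s / 2) = s / d by field_simp, hKb]
            _ ≤ Λ ^ (s / 2) := Real.rpow_le_rpow hbase hstep (by positivity)
        have hK'Kb : K' ≤ Kb := le_trans (min_le_right _ _) (min_le_left _ _)
        have hreal : K' * ((J : ℝ) ^ (s / d) * errJ u J f)
            ≤ Λ ^ (s / 2) * errLam u lam Λ f := by
          have hstep1 : K' * ((J : ℝ) ^ (s / d) * errJ u J f)
              ≤ (Kb * (J : ℝ) ^ (s / d)) * errJ u J f := by
            rw [← mul_assoc]
            exact mul_le_mul_of_nonneg_right
              (mul_le_mul_of_nonneg_right hK'Kb (by positivity)) (errJ_nonneg u J f)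
          exact le_trans hstep1
            (mul_le_mul hpow herr (errJ_nonneg u J f) (Real.rpow_nonneg (by linarith) _))
        calc ENNReal.ofReal (K' * ((J : ℝ) ^ (s / d) * errJ u J f))
            ≤ ENNReal.ofReal (Λ ^ (s / 2) * errLam u lam Λ f) :=
              ENNReal.ofReal_le_ofReal hreal
          _ ≤ SL := by rw [hSL]; exact le_iSup₂_of_le Λ hΛ1 le_rfl
          _ ≤ a + SL := le_add_self
    have hSJb : ENNReal.ofReal K' * SJ ≤ a + SL := by
      rw [hSJ, ENNReal.mul_iSup]
      refine iSup_le fun J => ?_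
      rw [ENNReal.mul_iSup]
      exact iSup_le fun hJ => key1 J hJ
    have hKa : ENNReal.ofReal K' * a ≤ a + SL := by
      calc ENNReal.ofReal K' * a ≤ 1 * a :=
            mul_le_mul_left (ENNReal.ofReal_le_one.2 hK'le1) a
        _ = a := one_mul a
        _ ≤ a + SL := le_self_add
    have h2 : ENNReal.ofReal K' * (a + SJ) ≤ 2 * (a + SL) := by
      rw [mul_add, two_mul]
      exact add_le_add hKa hSJb
    have hofr : ENNReal.ofReal (K' / 2) = ENNReal.ofReal K' * 2⁻¹ := by
      rw [ENNReal.ofReal_div_of_pos two_pos, div_eq_mul_inv, ENNReal.ofReal_ofNat]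
    calc ENNReal.ofReal (K' / 2) * (a + SJ)
        = ENNReal.ofReal K' * (a + SJ) * 2⁻¹ := by rw [hofr]; ring
      _ ≤ 2 * (a + SL) * 2⁻¹ := mul_le_mul_left h2 _
      _ = (a + SL) * (2 * 2⁻¹) := by ring
      _ = a + SL := by
          rw [ENNReal.mul_inv_cancel two_ne_zero ENNReal.ofNat_ne_top, mul_one]
  · -- second inequality
    have key2 : ∀ Λ : ℝ, 1 ≤ Λ →
        ENNReal.ofReal (Λ ^ (s / 2) * errLam u lam Λ f)
          ≤ ENNReal.ofReal (C₀ ^ (s / 2)) * a + ENNReal.ofReal Cb * SJ := by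
      intro Λ hΛ
      have hΛ0 : (0 : ℝ) ≤ Λ := by linarith
      by_cases hcase : Λ ≤ C₀
      · have h1 : Λ ^ (s / 2) * errLam u lam Λ f ≤ C₀ ^ (s / 2) * supNorm f :=
          mul_le_mul (Real.rpow_le_rpow hΛ0 hcase (by positivity))
            (errLam_le_supNorm u lam Λ f) (errLam_nonneg u lam Λ f) hC₀pow
        calc ENNReal.ofReal (Λ ^ (s / 2) * errLam u lam Λ f)
            ≤ ENNReal.ofReal (C₀ ^ (s / 2) * supNorm f) := ENNReal.ofReal_le_ofReal h1
          _ = ENNReal.ofReal (C₀ ^ (s / 2)) * a := ENNReal.ofReal_mul hC₀pow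
          _ ≤ _ := le_self_add
      · push_neg at hcase
        set T : Set ℕ := {j | 1 ≤ j ∧ lam j ≤ Λ} with hT
        have hj₀T : j₀ ∈ T := by
          refine ⟨hj₀, ?_⟩
          have h1 : lam j₀ ≤ c₂ * (j₀ : ℝ) ^ (2 / d) := (hlam j₀ le_rfl).2
          have h2 : c₂ * (j₀ : ℝ) ^ (2 / d) ≤ C₀ := le_max_right _ _
          linarith
        have hTb : BddAbove T := by
          refine ⟨max j₀ ⌈(Λ / c₁) ^ (d / 2)⌉₊, fun j hj => ?_⟩
          rcases le_or_gt j j₀ with h | h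
          · exact le_trans h (le_max_left _ _)
          · have hj₀j : j₀ ≤ j := h.le
            have h1 : c₁ * (j : ℝ) ^ (2 / d) ≤ Λ := le_trans (hlam j hj₀j).1 hj.2
            have h2 : (j : ℝ) ^ (2 / d) ≤ Λ / c₁ := by
              rw [le_div_iff₀ hc₁]
              linarith [mul_comm c₁ ((j : ℝ) ^ (2 / d))]
            have h3 : (j : ℝ) ≤ (Λ / c₁) ^ (d / 2) := by
              have h4 : ((j : ℝ) ^ (2 / d)) ^ (d / 2) ≤ (Λ / c₁) ^ (d / 2) :=
                Real.rpow_le_rpow (by positivity) h2 (by positivity)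
              have h5 : ((j : ℝ) ^ (2 / d)) ^ (d / 2) = (j : ℝ) := by
                rw [← Real.rpow_mul (Nat.cast_nonneg j),
                  show 2 / d * (d / 2) = 1 by field_simp, Real.rpow_one]
              linarith
            have h6 : j ≤ ⌈(Λ / c₁) ^ (d / 2)⌉₊ := by
              exact_mod_cast le_trans h3 (Nat.le_ceil _)
            exact le_trans h6 (le_max_right _ _)
        set J : ℕ := sSup T with hJdef
        have hJT : J ∈ T := Nat.sSup_mem ⟨j₀, hj₀T⟩ hTb
        have hJ1 : 1 ≤ J := hJT.1
        have hj₀J : j₀ ≤ J := by rw [hJdef]; exact le_csSup hTb hj₀T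
        have hJ1R : (1 : ℝ) ≤ (J : ℝ) := by exact_mod_cast hJ1
        have hnot : Λ < lam (J + 1) := by
          by_contra hcon
          push_neg at hcon
          have hmem : J + 1 ∈ T := ⟨by omega, hcon⟩
          have := le_csSup hTb hmem
          rw [← hJdef] at this
          omega
        have hup : lam (J + 1) ≤ c₂ * ((J : ℝ) + 1) ^ (2 / d) := by
          have := (hlam (J + 1) (by omega)).2
          push_cast at this
          exact this
        have hΛle : Λ ≤ (c₂ * 2 ^ (2 / d)) * (J : ℝ) ^ (2 / d) := by
          have h1 : ((J : ℝ) + 1) ^ (2 / d) ≤ (2 * (J : ℝ)) ^ (2 / d) :=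
            Real.rpow_le_rpow (by linarith) (by linarith) (by positivity)
          have h2 : (2 * (J : ℝ)) ^ (2 / d) = 2 ^ (2 / d) * (J : ℝ) ^ (2 / d) :=
            Real.mul_rpow (by norm_num) (by positivity)
          have h3 : c₂ * ((J : ℝ) + 1) ^ (2 / d) ≤ c₂ * (2 * (J : ℝ)) ^ (2 / d) :=
            mul_le_mul_of_nonneg_left h1 hc₂.le
          rw [h2] at h3
          calc Λ ≤ lam (J + 1) := hnot.le
            _ ≤ c₂ * ((J : ℝ) + 1) ^ (2 / d) := hup
            _ ≤ c₂ * (2 ^ (2 / d) * (J : ℝ) ^ (2 / d)) := h3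
            _ = (c₂ * 2 ^ (2 / d)) * (J : ℝ) ^ (2 / d) := by ring
        have hpow : Λ ^ (s / 2) ≤ Cb * (J : ℝ) ^ (s / d) := by
          calc Λ ^ (s / 2) ≤ ((c₂ * 2 ^ (2 / d)) * (J : ℝ) ^ (2 / d)) ^ (s / 2) :=
                Real.rpow_le_rpow hΛ0 hΛle (by positivity)
            _ = Cb * (J : ℝ) ^ (s / d) := by
                rw [Real.mul_rpow (by positivity) (by positivity),
                  ← Real.rpow_mul (Nat.cast_nonneg J),
                  show 2 / d * (s / 2) = s / d by field_simp, hCb]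
        have herr : errLam u lam Λ f ≤ errJ u J f :=
          errLam_le_errJ u lam f fun j h1 hjJ => le_trans (hmono j J h1 hjJ) hJT.2
        have hreal : Λ ^ (s / 2) * errLam u lam Λ f
            ≤ Cb * ((J : ℝ) ^ (s / d) * errJ u J f) := by
          rw [← mul_assoc]
          exact mul_le_mul hpow herr (errLam_nonneg u lam Λ f) (by positivity)
        calc ENNReal.ofReal (Λ ^ (s / 2) * errLam u lam Λ f)
            ≤ ENNReal.ofReal (Cb * ((J : ℝ) ^ (s / d) * errJ u J f)) :=
              ENNReal.ofReal_le_ofReal hreal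
          _ = ENNReal.ofReal Cb * ENNReal.ofReal ((J : ℝ) ^ (s / d) * errJ u J f) :=
              ENNReal.ofReal_mul hCbpos.le
          _ ≤ ENNReal.ofReal Cb * SJ := by
              refine mul_le_mul_right ?_ _
              rw [hSJ]
              exact le_iSup₂_of_le J hJ1 le_rfl
          _ ≤ _ := le_add_self
    have hSLb : SL ≤ ENNReal.ofReal (C₀ ^ (s / 2)) * a + ENNReal.ofReal Cb * SJ := by
      rw [hSL]
      exact iSup₂_le key2
    have h₁ : 1 + ENNReal.ofReal (C₀ ^ (s / 2)) ≤ ENNReal.ofReal (1 + C₀ ^ (s / 2) + Cb) := by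
      rw [← ENNReal.ofReal_one, ← ENNReal.ofReal_add (by norm_num) hC₀pow]
      exact ENNReal.ofReal_le_ofReal (by linarith)
    have h₂ : ENNReal.ofReal Cb ≤ ENNReal.ofReal (1 + C₀ ^ (s / 2) + Cb) :=
      ENNReal.ofReal_le_ofReal (by linarith)
    calc a + SL ≤ a + (ENNReal.ofReal (C₀ ^ (s / 2)) * a + ENNReal.ofReal Cb * SJ) :=
          add_le_add_right hSLb a
      _ = (1 + ENNReal.ofReal (C₀ ^ (s / 2))) * a + ENNReal.ofReal Cb * SJ := by ring
      _ ≤ ENNReal.ofReal (1 + C₀ ^ (s / 2) + Cb) * a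
            + ENNReal.ofReal (1 + C₀ ^ (s / 2) + Cb) * SJ :=
          add_le_add (mul_le_mul_left h₁ a) (mul_le_mul_left h₂ SJ)
      _ = ENNReal.ofReal (1 + C₀ ^ (s / 2) + Cb) * (a + SJ) := by ring
end
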